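/- arXiv:2008.04777 — 3 statements merged into one kernel-verified Lean document; each statement's English description precedes it below -/
import Mathlib

section
/- Let P, Q, R, S be g×g integer matrices satisfying Qᵀ*P = Pᵀ*Q, R*Pᵀ = P*Rᵀ, and P*Sᵀ - R*Qᵀ = 1. Then for every vector n ∈ ℤ^g: n lies in the image of the linear map x ↦ P.mulVec x if and only if Qᵀ.mulVec n lies in the image of x ↦ Pᵀ.mulVec x. -/
open Matrix

theorem Matrix.mulVec_sub_mulVec_eq_of_transpose_mulVec_eq {ι α : Type*} [Fintype ι]
    [DecidableEq ι] [Ring α] {P Q R S : Matrix ι ι α} (hRP : R * Pᵀ = P * Rᵀ)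
    (hPSRQ : P * Sᵀ - R * Qᵀ = 1) {n r : ι → α} (hr : Pᵀ *ᵥ r = Qᵀ *ᵥ n) :
    P *ᵥ (Sᵀ *ᵥ n - Rᵀ *ᵥ r) = n := by
  have hPR : (P * Rᵀ) *ᵥ r = (R * Qᵀ) *ᵥ n := by
    rw [← hRP, ← mulVec_mulVec, hr, mulVec_mulVec]
  calc P *ᵥ (Sᵀ *ᵥ n - Rᵀ *ᵥ r)
      = (P * Sᵀ) *ᵥ n - (P * Rᵀ) *ᵥ r := by rw [mulVec_sub, mulVec_mulVec, mulVec_mulVec]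
    _ = (P * Sᵀ - R * Qᵀ) *ᵥ n := by rw [hPR, sub_mulVec]
    _ = n := by rw [hPSRQ, one_mulVec]

theorem stmt2 (g : ℕ) (P Q R S : Matrix (Fin g) (Fin g) ℤ)
    (h1 : Qᵀ * P = Pᵀ * Q) (h2 : R * Pᵀ = P * Rᵀ) (h3 : P * Sᵀ - R * Qᵀ = 1)
    (n : Fin g → ℤ) :
    (∃ m : Fin g → ℤ, P.mulVec m = n) ↔
    (∃ r : Fin g → ℤ, Pᵀ.mulVec r = Qᵀ.mulVec n) := by
  constructor
  · rintro ⟨m, rfl⟩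
    exact ⟨Q *ᵥ m, by rw [mulVec_mulVec, mulVec_mulVec, h1]⟩
  · rintro ⟨r, hr⟩
    exact ⟨_, mulVec_sub_mulVec_eq_of_transpose_mulVec_eq h2 h3 hr⟩
end

section
/- Let P, Q, R, S be g×g integer matrices satisfying Qᵀ*P = Pᵀ*Q, R*Pᵀ = P*Rᵀ, and P*Sᵀ - R*Qᵀ = 1. Then the map ℤ^g → ℤ^g / Im(Pᵀ) sending n to the class of Qᵀ.mulVec n descends to a well-defined injective group homomorphism from ℤ^g / Im(P) to ℤ^g / Im(Pᵀ). -/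
open Matrix

/-! The map is `n ↦ Qᵀ n`. It respects the relations because `Qᵀ P m = Pᵀ (Q m)`.
For injectivity, `P Sᵀ - R Qᵀ = 1` splits any `n` as `n = P Sᵀ n - R Qᵀ n`; if `Qᵀ n = Pᵀ m`,
the symmetry `R Pᵀ = P Rᵀ` turns the second term into `P Rᵀ m`, so `n = P (Sᵀ n - Rᵀ m)`. -/

theorem Submodule.mapQ_injective_of_comap_le {R M N : Type*} [Ring R] [AddCommGroup M]
    [Module R M] [AddCommGroup N] [Module R N] {p : Submodule R M} {q : Submodule R N}
    {f : M →ₗ[R] N} (hf : p ≤ q.comap f) (h : q.comap f ≤ p) :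
    Function.Injective (p.mapQ q f hf) := by
  rw [← LinearMap.ker_eq_bot, ker_mapQ, eq_bot_iff, map_le_iff_le_comap, comap_bot, ker_mkQ]
  exact h

namespace Matrix

variable {n α : Type*} [Fintype n] [CommRing α]

theorem range_mulVecLin_le_comap_of_mul_eq {A B P P' : Matrix n n α} (h : A * P = P' * B) :
    LinearMap.range P.mulVecLin ≤ (LinearMap.range P'.mulVecLin).comap A.mulVecLin := by
  rintro _ ⟨m, rfl⟩
  exact ⟨B *ᵥ m, by simp only [mulVecLin_apply, mulVec_mulVec, h]⟩

theorem comap_range_transpose_le_range [DecidableEq n] {P Q R S : Matrix n n α}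
    (hRP : R * Pᵀ = P * Rᵀ) (hPS : P * Sᵀ - R * Qᵀ = 1) :
    (LinearMap.range Pᵀ.mulVecLin).comap Qᵀ.mulVecLin ≤ LinearMap.range P.mulVecLin := by
  rintro v ⟨m, hm⟩
  simp only [mulVecLin_apply] at hm
  refine ⟨Sᵀ *ᵥ v - Rᵀ *ᵥ m, ?_⟩
  calc P *ᵥ (Sᵀ *ᵥ v - Rᵀ *ᵥ m) = (P * Sᵀ) *ᵥ v - (R * Pᵀ) *ᵥ m := by
        rw [mulVec_sub, mulVec_mulVec, mulVec_mulVec, hRP]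
    _ = (P * Sᵀ - R * Qᵀ) *ᵥ v := by
        rw [← mulVec_mulVec m R, hm, mulVec_mulVec, sub_mulVec]
    _ = v := by rw [hPS, one_mulVec]

end Matrix

theorem stmt3 (g : ℕ) (P Q R S : Matrix (Fin g) (Fin g) ℤ)
    (h1 : Qᵀ * P = Pᵀ * Q) (h2 : R * Pᵀ = P * Rᵀ) (h3 : P * Sᵀ - R * Qᵀ = 1) :
    ∃ φ : ((Fin g → ℤ) ⧸ LinearMap.range P.mulVecLin) →+
          ((Fin g → ℤ) ⧸ LinearMap.range Pᵀ.mulVecLin),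
      Function.Injective φ ∧
      ∀ n : Fin g → ℤ,
        φ (Submodule.Quotient.mk n) = Submodule.Quotient.mk (Qᵀ.mulVec n) := by
  have hwd := range_mulVecLin_le_comap_of_mul_eq h1
  exact ⟨(Submodule.mapQ _ _ Qᵀ.mulVecLin hwd).toAddMonoidHom,
    Submodule.mapQ_injective_of_comap_le hwd (comap_range_transpose_le_range h2 h3), fun _ => rfl⟩
end

section
/- Let P, Q be g×g integer matrices with Qᵀ*P = Pᵀ*Q, and suppose P*x = n and P*x' = n' for rational vectors x = m/p and x' = m'/p' (p, p' positive integers, m, m' ∈ ℤ^g) with n, n' ∈ ℤ^g, so that ⟨P.mulVec x, Q.mulVec x'⟩ = ⟨n, Q.mulVec m'⟩ / p'. Then: if P.mulVec x = P.mulVec y = n for rational x, y, then ⟨P.mulVec x, Q.mulVec x'⟩ − ⟨P.mulVec y, Q.mulVec x'⟩ = 0; and if instead y is a rational vector satisfying P.mulVec y = n + P.mulVec l with l ∈ ℤ^g and y − x − l ∈ ker P, then ⟨P.mulVec x, Q.mulVec x'⟩ and ⟨P.mulVec y, Q.mulVec x'⟩ differ by an integer. -/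
open Matrix

theorem stmt19 (g : ℕ) (P Q : Matrix (Fin g) (Fin g) ℤ)
    (hPQ : Qᵀ * P = Pᵀ * Q)
    (p p' : ℕ) (hp : 0 < p) (hp' : 0 < p')
    (m m' n n' : Fin g → ℤ) (x x' : Fin g → ℚ)
    (hx : x = fun a => (m a : ℚ) / p) (hx' : x' = fun a => (m' a : ℚ) / p')
    (hn : (P.map (Int.cast : ℤ → ℚ)).mulVec x = fun a => (n a : ℚ))
    (hn' : (P.map (Int.cast : ℤ → ℚ)).mulVec x' = fun a => (n' a : ℚ)) :
    (∑ a, (P.map (Int.cast : ℤ → ℚ)).mulVec x a *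
          (Q.map (Int.cast : ℤ → ℚ)).mulVec x' a =
      (∑ a, (n a : ℚ) *
            (Q.map (Int.cast : ℤ → ℚ)).mulVec (fun b => (m' b : ℚ)) a) / p') ∧
    (∀ y : Fin g → ℚ,
        (P.map (Int.cast : ℤ → ℚ)).mulVec y = (fun a => (n a : ℚ)) →
        (∑ a, (P.map (Int.cast : ℤ → ℚ)).mulVec x a *
              (Q.map (Int.cast : ℤ → ℚ)).mulVec x' a) -
        (∑ a, (P.map (Int.cast : ℤ → ℚ)).mulVec y a *
              (Q.map (Int.cast : ℤ → ℚ)).mulVec x' a) = 0) ∧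
    (∀ (y : Fin g → ℚ) (l : Fin g → ℤ),
        (P.map (Int.cast : ℤ → ℚ)).mulVec y =
          (fun a => (n a : ℚ)) +
            (P.map (Int.cast : ℤ → ℚ)).mulVec (fun b => (l b : ℚ)) →
        (P.map (Int.cast : ℤ → ℚ)).mulVec (y - x - fun b => (l b : ℚ)) = 0 →
        ∃ k : ℤ,
          (∑ a, (P.map (Int.cast : ℤ → ℚ)).mulVec y a *
                (Q.map (Int.cast : ℤ → ℚ)).mulVec x' a) -
          (∑ a, (P.map (Int.cast : ℤ → ℚ)).mulVec x a *
                (Q.map (Int.cast : ℤ → ℚ)).mulVec x' a) = (k : ℚ)) := by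
  set A := P.map (Int.cast : ℤ → ℚ) with hA
  set B := Q.map (Int.cast : ℤ → ℚ) with hB
  have hAB : Bᵀ * A = Aᵀ * B := by
    ext i j
    have h : (((Qᵀ * P) i j : ℤ) : ℚ) = (((Pᵀ * Q) i j : ℤ) : ℚ) := by rw [hPQ]
    simp only [Matrix.mul_apply, Matrix.transpose_apply] at h ⊢
    push_cast at h
    simpa [hA, hB, Matrix.map_apply] using h
  refine ⟨?_, ?_, ?_⟩
  · have hx'' : x' = (p' : ℚ)⁻¹ • fun b => (m' b : ℚ) := by
      funext a; simp [hx', div_eq_inv_mul, Pi.smul_apply, smul_eq_mul]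
    rw [hn, hx'', Matrix.mulVec_smul]
    have hp'0 : (p' : ℚ) ≠ 0 := by positivity
    rw [Finset.sum_div]
    refine Finset.sum_congr rfl fun a _ => ?_
    simp [smul_eq_mul, div_eq_inv_mul]
    ring
  · intro y hy
    rw [hn, hy, sub_self]
  · intro y l hy _
    refine ⟨∑ a, (Q.mulVec l) a * n' a, ?_⟩
    rw [hy, hn]
    have key : ∑ a, ((fun a => (n a : ℚ)) + A.mulVec fun b => (l b : ℚ)) a
          * B.mulVec x' a
        - ∑ a, (n a : ℚ) * B.mulVec x' a
        = (A.mulVec fun b => (l b : ℚ)) ⬝ᵥ B.mulVec x' := by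
      simp only [Pi.add_apply, add_mul, Finset.sum_add_distrib, dotProduct]
      ring
    rw [key]
    have h1 : (A.mulVec fun b => (l b : ℚ)) ⬝ᵥ B.mulVec x'
        = (fun b => (l b : ℚ)) ⬝ᵥ (Aᵀ * B).mulVec x' := by
      rw [Matrix.dotProduct_mulVec, Matrix.dotProduct_mulVec,
        ← Matrix.vecMul_transpose, Matrix.vecMul_vecMul]
    have h2 : ((Bᵀ * A)).mulVec x' = Bᵀ.mulVec (A.mulVec x') := by
      rw [Matrix.mulVec_mulVec]
    rw [h1, ← hAB, h2, hn']
    have h3 : Bᵀ.mulVec (fun a => (n' a : ℚ))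
        = fun a => (((Qᵀ).mulVec n') a : ℚ) := by
      funext a
      simp [hB, Matrix.mulVec, dotProduct, Matrix.transpose_apply,
        Matrix.map_apply]
    rw [h3]
    show (fun b => (l b : ℚ)) ⬝ᵥ (fun a => (((Qᵀ).mulVec n') a : ℚ))
        = ((∑ a, (Q.mulVec l) a * n' a : ℤ) : ℚ)
    simp only [dotProduct, Matrix.mulVec, dotProduct,
      Matrix.transpose_apply]
    push_cast
    simp_rw [Finset.mul_sum, Finset.sum_mul]
    rw [Finset.sum_comm]
    exact Finset.sum_congr rfl fun a _ => Finset.sum_congr rfl fun b _ => by ring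
end
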